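/- Let H be a subgroup of a nontrivial finite solvable group G. If the Fitting height of H equals the Fitting height of G, then S(H) ≤ S(G) ≤ F(G), where S(X) denotes the smallest normal subgroup of X whose quotient has smaller Fitting height than X. -/

import Mathlib

/-- `FittingHeightLe n G` says the group `G` has a normal series of length at most `n`
with nilpotent quotients, i.e. Fitting height at most `n`. -/
def FittingHeightLe : ℕ → ∀ (G : Type) [Group G], Prop
  | 0, G, _ => Subsingleton G
  | (n+1), G, _ => ∃ (N : Subgroup G) (hN : N.Normal), Group.IsNilpotent N ∧
      (letI := hN; FittingHeightLe n (G ⧸ N))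

/-- The Fitting height of a group (junk value if no bound exists). -/
noncomputable def fittingHeight (G : Type) [Group G] : ℕ :=
  sInf {n | FittingHeightLe n G}

/-- `SG G` is the intersection of all normal subgroups of `G` whose quotient has
Fitting height strictly smaller than that of `G`. -/
noncomputable def SG (G : Type) [Group G] : Subgroup G :=
  sInf {K : Subgroup G | ∃ hK : K.Normal,
    (letI := hK; fittingHeight (G ⧸ K)) < fittingHeight G}

/-- The Fitting subgroup: the join of all nilpotent normal subgroups. -/
def FittingSub (G : Type) [Group G] : Subgroup G :=
  ⨆ (N : Subgroup G) (_ : N.Normal) (_ : Group.IsNilpotent N), N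

/-!
A Fitting series of `G` pulls back along an injective homomorphism, so Fitting height does
not increase on passing to subgroups; in particular `H ⧸ (K ⊓ H)` embeds in `G ⧸ K`. So if `H`
and `G` have the same Fitting height, every `K` in the intersection defining `S(G)` meets `H` in
a member of the intersection defining `S(H)`. The bottom term of a shortest Fitting series of
`G` is a nilpotent normal subgroup whose quotient has smaller Fitting height, so it lies between
`S(G)` and `F(G)`.
-/

theorem QuotientGroup.map_comap_injective {H G : Type*} [Group H] [Group G] (f : H →* G)
    (N : Subgroup G) [N.Normal] :
    Function.Injective (QuotientGroup.map (N.comap f) N f le_rfl) := by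
  rw [← MonoidHom.ker_eq_bot_iff, QuotientGroup.ker_map, QuotientGroup.map_mk'_self]

theorem isNilpotent_comap_of_injective {H G : Type*} [Group H] [Group G] {f : H →* G}
    (hf : Function.Injective f) (N : Subgroup G) [Group.IsNilpotent N] :
    Group.IsNilpotent (N.comap f) := by
  have hinj : Function.Injective (f.subgroupComap N) := fun a b hab =>
    Subtype.ext (hf (congrArg Subtype.val hab))
  exact Subgroup.isNilpotent_of_ker_le_center (f.subgroupComap N)
    (((MonoidHom.ker_eq_bot_iff _).mpr hinj).trans_le bot_le)

theorem Group.isNilpotent_of_isMulCommutative (G : Type*) [Group G] [IsMulCommutative G] :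
    Group.IsNilpotent G :=
  ⟨1, Subgroup.upperCentralSeries_one_eq_top_iff.mpr ‹_›⟩

theorem FittingHeightLe.of_injective {H G : Type} [Group H] [Group G] {f : H →* G}
    (hf : Function.Injective f) {n : ℕ} (hG : FittingHeightLe n G) : FittingHeightLe n H := by
  induction n generalizing H G with
  | zero =>
    have : Subsingleton G := hG
    exact ⟨fun a b => hf (Subsingleton.elim _ _)⟩
  | succ n ih =>
    obtain ⟨N, _, hN, hq⟩ := hG
    exact ⟨N.comap f, inferInstance, isNilpotent_comap_of_injective hf N,
      ih (QuotientGroup.map_comap_injective f N) hq⟩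

theorem FittingHeightLe.of_derivedSeries_eq_bot {G : Type} [Group G] {n : ℕ}
    (h : derivedSeries G n = ⊥) : FittingHeightLe n G := by
  induction n generalizing G with
  | zero =>
    rw [derivedSeries_zero] at h
    exact Subgroup.subsingleton_iff.mp (subsingleton_of_bot_eq_top h.symm)
  | succ n ih =>
    have : IsMulCommutative (derivedSeries G n) := Subgroup.commutator_self_eq_bot_iff.mp h
    refine ⟨derivedSeries G n, derivedSeries_normal G n,
      Group.isNilpotent_of_isMulCommutative _, ih ?_⟩
    rw [← map_derivedSeries_eq (QuotientGroup.mk'_surjective _), Subgroup.map_eq_bot_iff,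
      QuotientGroup.ker_mk']

theorem fittingHeightLe_fittingHeight (G : Type) [Group G] [Group.IsSolvable G] :
    FittingHeightLe (fittingHeight G) G := by
  obtain ⟨n, hn⟩ := Group.IsSolvable.solvable (G := G)
  exact Nat.sInf_mem (s := {n | FittingHeightLe n G})
    ⟨n, FittingHeightLe.of_derivedSeries_eq_bot hn⟩

theorem fittingHeight_le_of_injective {H G : Type} [Group H] [Group G] [Group.IsSolvable G]
    {f : H →* G} (hf : Function.Injective f) : fittingHeight H ≤ fittingHeight G :=
  Nat.sInf_le ((fittingHeightLe_fittingHeight G).of_injective hf)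

theorem SG_le_of_fittingHeight_lt {G : Type} [Group G] (K : Subgroup G) [hK : K.Normal]
    (h : fittingHeight (G ⧸ K) < fittingHeight G) : SG G ≤ K :=
  sInf_le ⟨hK, h⟩

theorem map_SG_le_SG_of_fittingHeight_eq {H G : Type} [Group H] [Group G] [Group.IsSolvable G]
    (f : H →* G) (hfh : fittingHeight H = fittingHeight G) :
    (SG H).map f ≤ SG G := by
  refine le_sInf fun K ⟨_, hK⟩ =>
    Subgroup.map_le_iff_le_comap.mpr (SG_le_of_fittingHeight_lt _ ?_)
  calc fittingHeight (H ⧸ K.comap f)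
      ≤ fittingHeight (G ⧸ K) :=
        fittingHeight_le_of_injective (QuotientGroup.map_comap_injective f K)
    _ < fittingHeight G := hK
    _ = fittingHeight H := hfh.symm

theorem le_FittingSub {G : Type} [Group G] (N : Subgroup G) [hN : N.Normal]
    [hnil : Group.IsNilpotent N] : N ≤ FittingSub G :=
  le_iSup₂_of_le N hN (le_iSup_of_le hnil le_rfl)

theorem SG_le_FittingSub (G : Type) [Group G] [Group.IsSolvable G] : SG G ≤ FittingSub G := by
  have hG := fittingHeightLe_fittingHeight G
  cases h : fittingHeight G with
  | zero =>
    rw [h] at hG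
    have : Subsingleton G := hG
    exact (Subgroup.eq_bot_of_subsingleton (SG G)).trans_le bot_le
  | succ m =>
    rw [h] at hG
    obtain ⟨N, _, _, hq⟩ := hG
    refine (SG_le_of_fittingHeight_lt N ?_).trans (le_FittingSub N)
    exact h ▸ Nat.lt_succ_of_le (Nat.sInf_le hq)

theorem statement_2_general (G : Type) [Group G]
    (hsol : IsSolvable G) (H : Subgroup G)
    (hfh : fittingHeight H = fittingHeight G) :
    (SG H).map H.subtype ≤ SG G ∧ SG G ≤ FittingSub G := by
  have : Group.IsSolvable G := hsol
  exact ⟨map_SG_le_SG_of_fittingHeight_eq H.subtype hfh, SG_le_FittingSub G⟩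

theorem statement_2 (G : Type) [Group G] [Finite G] [Nontrivial G]
    (hsol : IsSolvable G) (H : Subgroup G)
    (hfh : fittingHeight H = fittingHeight G) :
    (SG H).map H.subtype ≤ SG G ∧ SG G ≤ FittingSub G :=
  statement_2_general G hsol H hfh
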